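/- Let ω ∈ Ω and a ∈ ℤ₊², and define the configuration ω^a by: ω^a(0,0) = ω(γ_a^ω); ω^a(x,0) = ω(γ_{a+(x,0)}^ω) − ω(γ_{a+(x−1,0)}^ω) for x ≥ 1; ω^a(0,y) = ω(γ_{a+(0,y)}^ω) − ω(γ_{a+(0,y−1)}^ω) for y ≥ 1; and ω^a(z) = ω(a+z) otherwise. Then ω^a is a configuration (all values are nonnegative), ω^a(γ_z^{ω^a}) = ω(γ_{a+z}^ω) for every z ∈ ℤ₊², and V(T_{(1,1)}^{ω^a}) = V(T_{a+(1,1)}^ω) − a. -/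

import Mathlib

open scoped NNReal

/-- A site of the lattice `ℤ²`. -/
abbrev Site : Type := ℤ × ℤ

/-- The positive quadrant `ℤ₊²`. -/
def posQuad : Set Site := {z : Site | 0 ≤ z.1 ∧ 0 ≤ z.2}

/-- An admissible (up-right) step. -/
def IsStep (u v : Site) : Prop := v = u + (1, 0) ∨ v = u + (0, 1)

/-- `γ` is an up-right path from `(0,0)` to `z`, i.e. `γ ∈ Γ_z`. -/
def IsPathTo (z : Site) (γ : List Site) : Prop :=
  γ.head? = some ((0, 0) : Site) ∧ γ.getLast? = some z ∧ γ.Chain' IsStep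

/-- The length `ω(γ) = Σ_{z ∈ γ} ω(z)` of a path `γ` under the configuration `ω`. -/
noncomputable def plen (ω : Site → ℝ) (γ : List Site) : ℝ := (γ.map ω).sum

/-- `γ ∈ Γ_z` is `ω`-optimal if its length is maximal over `Γ_z`. -/
def IsOptimal (ω : Site → ℝ) (z : Site) (γ : List Site) : Prop :=
  IsPathTo z γ ∧ ∀ γ' : List Site, IsPathTo z γ' → plen ω γ' ≤ plen ω γ

/-- `γ` is below `γ'`: at every step index, the second coordinate of the site of `γ`
is at most that of the corresponding site of `γ'`. -/
def Below (γ γ' : List Site) : Prop :=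
  ∀ (i : ℕ) (h : i < γ.length) (h' : i < γ'.length),
    (γ.get ⟨i, h⟩).2 ≤ (γ'.get ⟨i, h'⟩).2

/-- `γ` is the low-optimal path of `Γ_z`: it is `ω`-optimal and below every
`ω`-optimal path of `Γ_z`. -/
def IsLowOptimal (ω : Site → ℝ) (z : Site) (γ : List Site) : Prop :=
  IsOptimal ω z γ ∧ ∀ γ' : List Site, IsOptimal ω z γ' → Below γ γ'

open Classical in
/-- The low-optimal path `γ_z^ω` (an arbitrary default when it does not exist). -/
noncomputable def lowOpt (ω : Site → ℝ) (z : Site) : List Site :=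
  if h : ∃ γ : List Site, IsLowOptimal ω z γ then h.choose else []

/-- The vertex set `V(T_z^ω) = {z' ∈ ℤ₊² : z ∈ γ_{z'}^ω}` of the subtree rooted at `z`. -/
def treeV (ω : Site → ℝ) (z : Site) : Set Site :=
  {z' : Site | z' ∈ posQuad ∧ z ∈ lowOpt ω z'}

/-!
The low-optimal path to `z` is produced by the last-passage recursion
`G(z) = max (G(z - (1,0))) (G(z - (0,1))) + ω(z)`: step back to a maximizing predecessor, to the
lower one `z - (0,1)` in case of a tie. The boundary values of `ω^a` are exactly the increments of
`G_ω` along the two axes through `a`, so `G_{ω^a}(z) = G_ω(a + z)` on `ℤ₊²`, and their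
nonnegativity is the monotonicity of `G_ω` along up-right steps. In the interior the two recursions
then make the same choices, so from `(1,1)` on the low-optimal paths of `ω^a` are those of `ω`
translated by `-a`, which gives the subtree identity.
-/

lemma IsStep.cases {w z : Site} (h : IsStep w z) :
    (z.1 = w.1 + 1 ∧ z.2 = w.2) ∨ (z.1 = w.1 ∧ z.2 = w.2 + 1) := by
  rcases h with rfl | rfl <;> simp

lemma IsStep.level_lt {w z : Site} (h : IsStep w z) : w.1 + w.2 < z.1 + z.2 := by
  rcases h.cases with ⟨h1, h2⟩ | ⟨h1, h2⟩ <;> omega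

lemma isStep_sub_one_zero (z : Site) : IsStep (z - (1, 0)) z := Or.inl (sub_add_cancel z _).symm

lemma isStep_sub_zero_one (z : Site) : IsStep (z - (0, 1)) z := Or.inr (sub_add_cancel z _).symm

lemma add_mem_posQuad {a z : Site} (ha : a ∈ posQuad) (hz : z ∈ posQuad) : a + z ∈ posQuad :=
  ⟨add_nonneg ha.1 hz.1, add_nonneg ha.2 hz.2⟩

@[elab_as_elim]
lemma posQuad_induction {P : ∀ z, z ∈ posQuad → Prop}
    (ih : ∀ z hz, (∀ w hw, w.1 + w.2 < z.1 + z.2 → P w hw) → P z hz)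
    (z : Site) (hz : z ∈ posQuad) : P z hz := by
  suffices h : ∀ n : ℕ, ∀ z hz, (z.1 + z.2).toNat = n → P z hz from h _ z hz rfl
  intro n
  induction n using Nat.strong_induction_on with
  | _ n ihn =>
    rintro z hz rfl
    exact ih z hz fun w hw hlt => ihn _ (by have := hw.1; have := hw.2; omega) w hw rfl

namespace IsPathTo

variable {u w z : Site} {γ γ' δ : List Site}

lemma ne_nil (h : IsPathTo z γ) : γ ≠ [] := by
  rintro rfl
  simp [IsPathTo] at h

lemma singleton_iff : IsPathTo z [w] ↔ w = (0, 0) ∧ z = (0, 0) := by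
  simp only [IsPathTo, List.head?_cons, List.getLast?_singleton, Option.some.injEq]
  constructor
  · rintro ⟨rfl, rfl, -⟩; exact ⟨rfl, rfl⟩
  · rintro ⟨rfl, rfl⟩; exact ⟨rfl, rfl, List.isChain_singleton _⟩

lemma origin : IsPathTo (0, 0) [(0, 0)] := singleton_iff.2 ⟨rfl, rfl⟩

lemma append (h : IsPathTo w δ) (hs : IsStep w z) : IsPathTo z (δ ++ [z]) := by
  obtain ⟨h1, h2, h3⟩ := h
  refine ⟨?_, by simp, ?_⟩
  · rcases δ with _ | ⟨b, l⟩
    · simp at h1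
    · simpa using h1
  · rw [List.Chain', List.isChain_append]
    refine ⟨h3, List.isChain_singleton _, fun x hx y hy => ?_⟩
    rw [h2, Option.mem_some_iff] at hx
    simp only [List.head?_cons, Option.mem_some_iff] at hy
    exact hx ▸ hy ▸ hs

lemma of_append (hδ : δ ≠ []) (h : IsPathTo z (δ ++ [u])) :
    u = z ∧ IsPathTo (δ.getLast hδ) δ ∧ IsStep (δ.getLast hδ) z := by
  obtain ⟨h1, h2, h3⟩ := h
  rw [List.getLast?_concat, Option.some_inj] at h2
  subst h2
  rw [List.Chain', List.isChain_append] at h3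
  refine ⟨rfl, ⟨?_, List.getLast?_eq_some_getLast hδ, h3.1⟩, h3.2.2 _ ?_ _ rfl⟩
  · rcases δ with _ | ⟨b, l⟩
    · exact absurd rfl hδ
    · simpa using h1
  · simp [List.getLast?_eq_some_getLast hδ]

@[elab_as_elim]
lemma induction {P : ∀ z γ, IsPathTo z γ → Prop} (origin : P (0, 0) [(0, 0)] origin)
    (step : ∀ w z δ (hδ : IsPathTo w δ) (hs : IsStep w z),
      P w δ hδ → P z (δ ++ [z]) (hδ.append hs))
    (h : IsPathTo z γ) : P z γ h := by
  induction γ using List.reverseRecOn generalizing z with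
  | nil => exact absurd rfl h.ne_nil
  | append_singleton δ u ih =>
    rcases eq_or_ne δ [] with rfl | hδ
    · obtain ⟨rfl, rfl⟩ := singleton_iff.1 h
      exact origin
    · obtain ⟨rfl, hp, hs⟩ := of_append hδ h
      exact step _ _ _ hp hs (ih hp)

lemma mem_posQuad (h : IsPathTo z γ) : z ∈ posQuad := by
  induction h using IsPathTo.induction with
  | origin => exact ⟨le_rfl, le_rfl⟩
  | step w z δ _ hs ih =>
    have := ih.1
    have := ih.2
    rcases hs.cases with h | h <;> constructor <;> omega

lemma mem_bounds (h : IsPathTo z γ) (hw : w ∈ γ) :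
    0 ≤ w.1 ∧ 0 ≤ w.2 ∧ w.1 ≤ z.1 ∧ w.2 ≤ z.2 := by
  induction h using IsPathTo.induction with
  | origin => obtain rfl := List.mem_singleton.1 hw; simp
  | step u z δ hδ hs ih =>
    have hu := hδ.mem_posQuad
    rcases List.mem_append.1 hw with hw | hw
    · have := ih hw; rcases hs.cases with h | h <;> omega
    · obtain rfl := List.mem_singleton.1 hw
      have := hu.1; have := hu.2; rcases hs.cases with h | h <;> omega

lemma length_eq (h : IsPathTo z γ) : (γ.length : ℤ) = z.1 + z.2 + 1 := by
  induction h using IsPathTo.induction with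
  | origin => simp
  | step w z δ _ hs ih => rcases hs.cases with h | h <;> simp <;> omega

lemma getElem_level (h : IsPathTo z γ) (i : ℕ) (hi : i < γ.length) :
    γ[i].1 + γ[i].2 = i := by
  induction h using IsPathTo.induction with
  | origin =>
    obtain rfl : i = 0 := by simpa using hi
    simp
  | step w z δ hδ hs ih =>
    rcases Nat.lt_or_ge i δ.length with hi' | hi'
    · rw [List.getElem_append_left hi']; exact ih hi'
    · obtain rfl : i = δ.length := by
        simp only [List.length_append, List.length_singleton] at hi; omega
      have := hδ.length_eq
      rw [List.getElem_concat_length rfl]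
      rcases hs.cases with h | h <;> omega

lemma exists_eq_append (h : IsPathTo z γ) (hz : z ≠ (0, 0)) :
    ∃ δ w, γ = δ ++ [z] ∧ IsPathTo w δ ∧ IsStep w z := by
  induction h using IsPathTo.induction with
  | origin => exact absurd rfl hz
  | step w z δ hδ hs _ => exact ⟨δ, w, rfl, hδ, hs⟩

lemma eq_of_below (h : IsPathTo z γ) (h' : IsPathTo z γ') (hb : Below γ γ') (hb' : Below γ' γ) :
    γ = γ' := by
  have hlen : γ.length = γ'.length := by have := h.length_eq; have := h'.length_eq; omega
  refine List.ext_getElem hlen fun i hi hi' => ?_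
  have h2 : γ[i].2 = γ'[i].2 := le_antisymm (hb i hi hi') (hb' i hi' hi)
  have := h.getElem_level i hi
  have := h'.getElem_level i hi'
  exact Prod.ext (by omega) h2

end IsPathTo

lemma Below.append {γ γ' : List Site} {x y : Site} (h : Below γ γ')
    (hlen : γ.length = γ'.length) (hxy : x.2 ≤ y.2) : Below (γ ++ [x]) (γ' ++ [y]) := by
  intro i hi hi'
  simp only [List.length_append, List.length_singleton] at hi hi'
  rcases Nat.lt_or_ge i γ.length with hil | hil
  · have hil' : i < γ'.length := hlen ▸ hil
    simpa [List.getElem_append_left hil, List.getElem_append_left hil'] using h i hil hil'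
  · obtain rfl : i = γ.length := by omega
    simpa [hlen] using hxy

section Optimal

variable {ω : Site → ℝ} {w z : Site} {γ δ : List Site}

lemma plen_append_singleton (ω : Site → ℝ) (γ : List Site) (z : Site) :
    plen ω (γ ++ [z]) = plen ω γ + ω z := by
  simp [plen]

lemma IsOptimal.of_append (h : IsOptimal ω z (δ ++ [z])) (hδ : IsPathTo w δ) (hs : IsStep w z) :
    IsOptimal ω w δ := by
  refine ⟨hδ, fun δ' hδ' => ?_⟩
  have := h.2 _ (hδ'.append hs)
  rw [plen_append_singleton, plen_append_singleton] at this
  linarith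

lemma IsLowOptimal.eq {γ' : List Site} (h : IsLowOptimal ω z γ) (h' : IsLowOptimal ω z γ') :
    γ = γ' :=
  h.1.1.eq_of_below h'.1.1 (h.2 _ h'.1) (h'.2 _ h.1)

lemma lowOpt_eq_of_isLowOptimal (h : IsLowOptimal ω z γ) : lowOpt ω z = γ := by
  have hex : ∃ γ, IsLowOptimal ω z γ := ⟨γ, h⟩
  rw [lowOpt, dif_pos hex]
  exact hex.choose_spec.eq h

end Optimal

noncomputable def lastPassage (ω : Site → ℝ) (z : Site) : ℝ :=
  if z.1 ≤ 0 ∧ z.2 ≤ 0 then ω z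
  else if z.1 ≤ 0 then lastPassage ω (z - (0, 1)) + ω z
  else if z.2 ≤ 0 then lastPassage ω (z - (1, 0)) + ω z
  else max (lastPassage ω (z - (1, 0))) (lastPassage ω (z - (0, 1))) + ω z
termination_by z.1.toNat + z.2.toNat
decreasing_by all_goals simp only [Prod.fst_sub, Prod.snd_sub]; omega

section LastPassage

variable {ω : Site → ℝ} {w z : Site}

lemma lastPassage_origin : lastPassage ω (0, 0) = ω (0, 0) := by
  rw [lastPassage, if_pos ⟨le_rfl, le_rfl⟩]

lemma lastPassage_of_fst_nonpos (h1 : z.1 ≤ 0) (h2 : 1 ≤ z.2) :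
    lastPassage ω z = lastPassage ω (z - (0, 1)) + ω z := by
  rw [lastPassage, if_neg (by omega), if_pos h1]

lemma lastPassage_of_snd_nonpos (h1 : 1 ≤ z.1) (h2 : z.2 ≤ 0) :
    lastPassage ω z = lastPassage ω (z - (1, 0)) + ω z := by
  rw [lastPassage, if_neg (by omega), if_neg (by omega), if_pos h2]

lemma lastPassage_of_one_le (h1 : 1 ≤ z.1) (h2 : 1 ≤ z.2) :
    lastPassage ω z = max (lastPassage ω (z - (1, 0))) (lastPassage ω (z - (0, 1))) + ω z := by
  rw [lastPassage, if_neg (by omega), if_neg (by omega), if_neg (by omega)]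

lemma lastPassage_add_le (hw : w ∈ posQuad) (hs : IsStep w z) :
    lastPassage ω w + ω z ≤ lastPassage ω z := by
  obtain ⟨hw1, hw2⟩ := hw
  rcases hs with rfl | rfl
  · rcases le_or_gt w.2 0 with h2 | h2
    · rw [lastPassage_of_snd_nonpos (z := w + (1, 0)) (by simp; omega) (by simpa),
        add_sub_cancel_right]
    · rw [lastPassage_of_one_le (z := w + (1, 0)) (by simp; omega) (by simp; omega),
        add_sub_cancel_right]
      gcongr
      exact le_max_left _ _
  · rcases le_or_gt w.1 0 with h1 | h1
    · rw [lastPassage_of_fst_nonpos (z := w + (0, 1)) (by simpa) (by simp; omega),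
        add_sub_cancel_right]
    · rw [lastPassage_of_one_le (z := w + (0, 1)) (by simp; omega) (by simp; omega),
        add_sub_cancel_right]
      gcongr
      exact le_max_right _ _

end LastPassage

noncomputable def lowPred (ω : Site → ℝ) (z : Site) : Site :=
  if z.1 ≤ 0 then z - (0, 1)
  else if z.2 ≤ 0 then z - (1, 0)
  else if lastPassage ω (z - (1, 0)) ≤ lastPassage ω (z - (0, 1)) then z - (0, 1)
  else z - (1, 0)

section LowPred

variable {ω : Site → ℝ} {q z : Site}

lemma isStep_lowPred : IsStep (lowPred ω z) z := by
  unfold lowPred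
  split_ifs
  all_goals first | exact isStep_sub_one_zero z | exact isStep_sub_zero_one z

lemma lowPred_level_lt (h : ¬(z.1 ≤ 0 ∧ z.2 ≤ 0)) :
    (lowPred ω z).1.toNat + (lowPred ω z).2.toNat < z.1.toNat + z.2.toNat := by
  unfold lowPred
  split_ifs <;> simp only [Prod.fst_sub, Prod.snd_sub] <;> omega

lemma lowPred_mem_posQuad (hz : z ∈ posQuad) (h0 : z ≠ (0, 0)) : lowPred ω z ∈ posQuad := by
  obtain ⟨h1, h2⟩ := hz
  have : z.1 ≠ 0 ∨ z.2 ≠ 0 := by contrapose! h0; exact Prod.ext h0.1 h0.2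
  unfold lowPred
  split_ifs <;> constructor <;> simp only [Prod.fst_sub, Prod.snd_sub] <;> omega

lemma lastPassage_eq_lowPred (hz : z ∈ posQuad) (h0 : z ≠ (0, 0)) :
    lastPassage ω z = lastPassage ω (lowPred ω z) + ω z := by
  obtain ⟨h1, h2⟩ := hz
  have : z.1 ≠ 0 ∨ z.2 ≠ 0 := by contrapose! h0; exact Prod.ext h0.1 h0.2
  unfold lowPred
  split_ifs with h1' h2' hle
  · exact lastPassage_of_fst_nonpos h1' (by omega)
  · exact lastPassage_of_snd_nonpos (by omega) h2'
  · rw [lastPassage_of_one_le (by omega) (by omega), max_eq_right hle]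
  · rw [lastPassage_of_one_le (by omega) (by omega), max_eq_left (le_of_not_ge hle)]

lemma lastPassage_lt_lowPred (hq : q ∈ posQuad) (hs : IsStep q z) (h : q.2 < (lowPred ω z).2) :
    lastPassage ω q < lastPassage ω (lowPred ω z) := by
  obtain ⟨hq1, hq2⟩ := hq
  unfold lowPred at h ⊢
  rcases hs with rfl | rfl
  · split_ifs at h ⊢ <;>
      simp only [Prod.snd_sub, Prod.snd_add, add_zero, add_sub_cancel_right, lt_self_iff_false] at h
      <;> omega
  · split_ifs at h ⊢ with h1 h2 hle
    · simp only [add_sub_cancel_right, lt_self_iff_false] at h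
    · simp only [Prod.snd_add] at h2; omega
    · simp only [add_sub_cancel_right, lt_self_iff_false] at h
    · simpa only [add_sub_cancel_right, not_le] using hle

end LowPred

noncomputable def lowPath (ω : Site → ℝ) (z : Site) : List Site :=
  if z.1 ≤ 0 ∧ z.2 ≤ 0 then [z] else lowPath ω (lowPred ω z) ++ [z]
termination_by z.1.toNat + z.2.toNat
decreasing_by exact lowPred_level_lt ‹_›

section LowPath

variable {ω : Site → ℝ} {z : Site}

lemma lowPath_origin : lowPath ω (0, 0) = [(0, 0)] := by
  rw [lowPath, if_pos ⟨le_rfl, le_rfl⟩]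

lemma lowPath_eq_append (hz : z ∈ posQuad) (h0 : z ≠ (0, 0)) :
    lowPath ω z = lowPath ω (lowPred ω z) ++ [z] := by
  rw [lowPath, if_neg]
  rintro ⟨h1, h2⟩
  exact h0 (Prod.ext (le_antisymm h1 hz.1) (le_antisymm h2 hz.2))

lemma isPathTo_lowPath (hz : z ∈ posQuad) : IsPathTo z (lowPath ω z) := by
  induction z, hz using posQuad_induction with
  | ih z hz ih =>
    rcases eq_or_ne z (0, 0) with rfl | h0
    · rw [lowPath_origin]; exact IsPathTo.origin
    · rw [lowPath_eq_append hz h0]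
      exact (ih _ (lowPred_mem_posQuad hz h0) isStep_lowPred.level_lt).append isStep_lowPred

lemma plen_lowPath (hz : z ∈ posQuad) : plen ω (lowPath ω z) = lastPassage ω z := by
  induction z, hz using posQuad_induction with
  | ih z hz ih =>
    rcases eq_or_ne z (0, 0) with rfl | h0
    · simp [lowPath_origin, lastPassage_origin, plen]
    · rw [lowPath_eq_append hz h0, plen_append_singleton, lastPassage_eq_lowPred hz h0,
        ih _ (lowPred_mem_posQuad hz h0) isStep_lowPred.level_lt]

lemma plen_le_lastPassage {γ : List Site} (h : IsPathTo z γ) : plen ω γ ≤ lastPassage ω z := by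
  induction h using IsPathTo.induction with
  | origin => simp [lastPassage_origin, plen]
  | step w z δ hδ hs ih =>
    rw [plen_append_singleton]
    linarith [lastPassage_add_le (ω := ω) hδ.mem_posQuad hs]

end LowPath

section LowOptimal

variable {ω : Site → ℝ} {z : Site}

lemma below_lowPath {u : Site} (hu : u ∈ posQuad) {v : Site} {γ : List Site}
    (hopt : IsOptimal ω v γ) (hlevel : u.1 + u.2 = v.1 + v.2) (hle : u.2 ≤ v.2) :
    Below (lowPath ω u) γ := by
  induction u, hu using posQuad_induction generalizing v γ with
  | ih u hu ih =>
    rcases eq_or_ne u (0, 0) with rfl | hu0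
    · rw [lowPath_origin]
      intro i hi hi'
      obtain rfl : i = 0 := by simpa using hi
      exact (hopt.1.mem_bounds (List.getElem_mem hi')).2.1
    have hv0 : v ≠ (0, 0) := by
      rintro rfl
      exact hu0 (Prod.ext (by have := hu.1; have := hu.2; simp only [add_zero] at hlevel; omega)
        (by simpa using hle.antisymm hu.2))
    obtain ⟨δ, q, rfl, hδ, hs⟩ := hopt.1.exists_eq_append hv0
    have hp : lowPred ω u ∈ posQuad := lowPred_mem_posQuad hu hu0
    have hpu : IsStep (lowPred ω u) u := isStep_lowPred
    -- if `q` were strictly lower than `lowPred ω u`, then `u = v` and the path through `q`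
    -- would be strictly shorter than `lowPath ω u`
    have hpq : (lowPred ω u).2 ≤ q.2 := by
      by_contra! hlt
      obtain rfl : u = v := by
        rcases hpu.cases with h | h <;> rcases hs.cases with h' | h' <;>
          exact Prod.ext (by omega) (by omega)
      have hshort := lastPassage_lt_lowPred hδ.mem_posQuad hs hlt
      have hbest := hopt.2 _ (isPathTo_lowPath (ω := ω) hu)
      rw [plen_lowPath hu, lastPassage_eq_lowPred hu hu0, plen_append_singleton] at hbest
      linarith [plen_le_lastPassage (ω := ω) hδ]
    rw [lowPath_eq_append hu hu0]
    refine Below.append (ih _ hp hpu.level_lt (hopt.of_append hδ hs) ?_ hpq) ?_ hle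
    · rcases hpu.cases with h | h <;> rcases hs.cases with h' | h' <;> omega
    · have := (isPathTo_lowPath (ω := ω) hp).length_eq
      have := hδ.length_eq
      rcases hpu.cases with h | h <;> rcases hs.cases with h' | h' <;> omega

lemma isLowOptimal_lowPath (hz : z ∈ posQuad) : IsLowOptimal ω z (lowPath ω z) :=
  ⟨⟨isPathTo_lowPath hz, fun _ hγ => plen_lowPath hz ▸ plen_le_lastPassage hγ⟩,
    fun _ hopt => below_lowPath hz hopt rfl le_rfl⟩

lemma lowOpt_eq_lowPath (hz : z ∈ posQuad) : lowOpt ω z = lowPath ω z :=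
  lowOpt_eq_of_isLowOptimal (isLowOptimal_lowPath hz)

lemma plen_lowOpt (hz : z ∈ posQuad) : plen ω (lowOpt ω z) = lastPassage ω z := by
  rw [lowOpt_eq_lowPath hz, plen_lowPath hz]

lemma lastPassage_nonneg (hω : ∀ z, 0 ≤ ω z) (hz : z ∈ posQuad) : 0 ≤ lastPassage ω z := by
  rw [← plen_lowPath hz, plen]
  exact List.sum_nonneg fun x hx => by
    obtain ⟨w, -, rfl⟩ := List.mem_map.1 hx
    exact hω w

end LowOptimal

/-- The configuration `ω^a`, with each `ω(γ_z^ω)` in its boundary values written as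
`lastPassage ω z`. -/
structure IsShiftedConfig (ω : Site → ℝ) (a : Site) (ω' : Site → ℝ) : Prop where
  origin : ω' (0, 0) = lastPassage ω a
  axis_fst : ∀ x : ℤ, 1 ≤ x →
    ω' (x, 0) = lastPassage ω (a + (x, 0)) - lastPassage ω (a + (x - 1, 0))
  axis_snd : ∀ y : ℤ, 1 ≤ y →
    ω' (0, y) = lastPassage ω (a + (0, y)) - lastPassage ω (a + (0, y - 1))
  off_axes : ∀ z : Site, z ≠ (0, 0) → ¬(z.2 = 0 ∧ 1 ≤ z.1) → ¬(z.1 = 0 ∧ 1 ≤ z.2) →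
    ω' z = ω (a + z)

namespace IsShiftedConfig

variable {ω ω' : Site → ℝ} {a : Site}

lemma nonneg (h : IsShiftedConfig ω a ω') (hω : ∀ z, 0 ≤ ω z) (ha : a ∈ posQuad) (z : Site) :
    0 ≤ ω' z := by
  obtain ⟨x, y⟩ := z
  by_cases h0 : (x, y) = ((0, 0) : Site)
  · rw [h0, h.origin]
    exact lastPassage_nonneg hω ha
  by_cases hx : y = 0 ∧ 1 ≤ x
  · obtain ⟨rfl, hx⟩ := hx
    have hs : IsStep (a + (x - 1, 0)) (a + (x, 0)) := Or.inl (by ext <;> simp; ring)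
    rw [h.axis_fst x hx, sub_nonneg]
    linarith [lastPassage_add_le (ω := ω) (add_mem_posQuad ha ⟨by simp; omega, le_rfl⟩) hs,
      hω (a + (x, 0))]
  by_cases hy : x = 0 ∧ 1 ≤ y
  · obtain ⟨rfl, hy⟩ := hy
    have hs : IsStep (a + (0, y - 1)) (a + (0, y)) := Or.inr (by ext <;> simp; ring)
    rw [h.axis_snd y hy, sub_nonneg]
    linarith [lastPassage_add_le (ω := ω) (add_mem_posQuad ha ⟨le_rfl, by simp; omega⟩) hs,
      hω (a + (0, y))]
  rw [h.off_axes _ h0 hx hy]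
  exact hω _

lemma lastPassage_eq (h : IsShiftedConfig ω a ω') (ha : a ∈ posQuad) {z : Site}
    (hz : z ∈ posQuad) : lastPassage ω' z = lastPassage ω (a + z) := by
  induction z, hz using posQuad_induction with
  | ih z hz ih =>
    obtain ⟨x, y⟩ := z
    obtain ⟨hx, hy⟩ := hz
    simp only at hx hy ih
    rcases (show x = 0 ∨ 1 ≤ x by omega) with rfl | hx <;>
      rcases (show y = 0 ∨ 1 ≤ y by omega) with rfl | hy
    · rw [lastPassage_origin, h.origin, Prod.mk_zero_zero, add_zero]
    · rw [lastPassage_of_fst_nonpos le_rfl hy, Prod.mk_sub_mk, sub_zero,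
        ih _ ⟨le_rfl, by simp; omega⟩ (by simp), h.axis_snd y hy]
      ring
    · rw [lastPassage_of_snd_nonpos hx le_rfl, Prod.mk_sub_mk, sub_zero,
        ih _ ⟨by simp; omega, le_rfl⟩ (by simp), h.axis_fst x hx]
      ring
    · have := ha.1; have := ha.2
      rw [lastPassage_of_one_le hx hy,
        lastPassage_of_one_le (z := a + (x, y)) (by simp; omega) (by simp; omega),
        ih _ ⟨by simp; omega, by simp; omega⟩ (by simp),
        ih _ ⟨by simp; omega, by simp; omega⟩ (by simp),
        h.off_axes _ (by simp; omega) (by simp; omega) (by simp; omega),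
        add_sub_assoc, add_sub_assoc]

end IsShiftedConfig

section Translate

variable {ω ω' : Site → ℝ} {a : Site}

lemma lowPred_add (ha : a ∈ posQuad)
    (hT : ∀ z ∈ posQuad, lastPassage ω' z = lastPassage ω (a + z)) {z : Site}
    (h1 : 1 ≤ z.1) (h2 : 1 ≤ z.2) : lowPred ω (a + z) = a + lowPred ω' z := by
  obtain ⟨ha1, ha2⟩ := ha
  have hT' : ∀ e : Site, z - e ∈ posQuad → lastPassage ω' (z - e) = lastPassage ω (a + z - e) :=
    fun e he => by rw [hT _ he, add_sub_assoc]
  have h1' : ¬(a + z).1 ≤ 0 := by simp; omega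
  have h2' : ¬(a + z).2 ≤ 0 := by simp; omega
  rw [lowPred, lowPred, if_neg h1', if_neg h2', if_neg (show ¬z.1 ≤ 0 by omega),
    if_neg (show ¬z.2 ≤ 0 by omega),
    hT' _ ⟨by simp; omega, by simp; omega⟩, hT' _ ⟨by simp; omega, by simp; omega⟩]
  split_ifs <;> exact add_sub_assoc _ _ _

lemma mem_lowPath_add_iff (ha : a ∈ posQuad)
    (hT : ∀ z ∈ posQuad, lastPassage ω' z = lastPassage ω (a + z)) {w z : Site}
    (hw1 : 1 ≤ w.1) (hw2 : 1 ≤ w.2) (hz : z ∈ posQuad) :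
    w ∈ lowPath ω' z ↔ a + w ∈ lowPath ω (a + z) := by
  induction z, hz using posQuad_induction with
  | ih z hz ih =>
    have haz := add_mem_posQuad ha hz
    by_cases hz1 : 1 ≤ z.1 ∧ 1 ≤ z.2
    · have hz0 : z ≠ (0, 0) := by rintro rfl; simp at hz1
      have haz0 : a + z ≠ (0, 0) := by
        rintro h
        have := congrArg Prod.fst h
        simp only [Prod.fst_add] at this
        have := ha.1
        omega
      rw [lowPath_eq_append hz hz0, lowPath_eq_append haz haz0, lowPred_add ha hT hz1.1 hz1.2,
        List.mem_append, List.mem_append, List.mem_singleton, List.mem_singleton, add_right_inj,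
        ih _ (lowPred_mem_posQuad hz hz0) isStep_lowPred.level_lt]
    · refine iff_of_false (fun hw => ?_) (fun hw => ?_)
      · have := (isPathTo_lowPath hz).mem_bounds hw
        omega
      · have := (isPathTo_lowPath haz).mem_bounds hw
        simp only [Prod.fst_add, Prod.snd_add] at this
        omega

lemma treeV_add (ha : a ∈ posQuad)
    (hT : ∀ z ∈ posQuad, lastPassage ω' z = lastPassage ω (a + z)) {w : Site}
    (hw1 : 1 ≤ w.1) (hw2 : 1 ≤ w.2) : treeV ω' w = (· - a) '' treeV ω (a + w) := by
  ext z
  constructor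
  · rintro ⟨hz, hw⟩
    have haz := add_mem_posQuad ha hz
    refine ⟨a + z, ⟨haz, ?_⟩, add_sub_cancel_left a z⟩
    rw [lowOpt_eq_lowPath hz] at hw
    rwa [lowOpt_eq_lowPath haz, ← mem_lowPath_add_iff ha hT hw1 hw2 hz]
  · rintro ⟨u, ⟨hu, hw⟩, rfl⟩
    rw [lowOpt_eq_lowPath hu] at hw
    have hb := (isPathTo_lowPath hu).mem_bounds hw
    simp only [Prod.fst_add, Prod.snd_add] at hb
    have hua : u - a ∈ posQuad :=
      ⟨by simp only [Prod.fst_sub]; omega, by simp only [Prod.snd_sub]; omega⟩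
    refine ⟨hua, ?_⟩
    rwa [lowOpt_eq_lowPath hua, mem_lowPath_add_iff ha hT hw1 hw2 hua, add_sub_cancel]

end Translate

/-- Step II of the proof of Theorem 2: the configuration `ω^a` is nonnegative,
satisfies `ω^a(γ_z^{ω^a}) = ω(γ_{a+z}^ω)` for all `z ∈ ℤ₊²`, and
`V(T_{(1,1)}^{ω^a}) = V(T_{a+(1,1)}^ω) − a`. -/
theorem translated_configuration (ω : Site → ℝ) (hω : ∀ z : Site, 0 ≤ ω z)
    (a : Site) (ha : a ∈ posQuad) (ωa : Site → ℝ)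
    (h0 : ωa (0, 0) = plen ω (lowOpt ω a))
    (hx : ∀ x : ℤ, 1 ≤ x →
      ωa (x, 0) = plen ω (lowOpt ω (a + (x, 0))) - plen ω (lowOpt ω (a + (x - 1, 0))))
    (hy : ∀ y : ℤ, 1 ≤ y →
      ωa (0, y) = plen ω (lowOpt ω (a + (0, y))) - plen ω (lowOpt ω (a + (0, y - 1))))
    (hoth : ∀ z : Site, z ≠ (0, 0) → ¬(z.2 = 0 ∧ 1 ≤ z.1) → ¬(z.1 = 0 ∧ 1 ≤ z.2) →
      ωa z = ω (a + z)) :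
    (∀ z : Site, 0 ≤ ωa z) ∧
    (∀ z ∈ posQuad, plen ωa (lowOpt ωa z) = plen ω (lowOpt ω (a + z))) ∧
    treeV ωa (1, 1) = (· - a) '' treeV ω (a + (1, 1)) := by
  have hL : ∀ z ∈ posQuad, plen ω (lowOpt ω (a + z)) = lastPassage ω (a + z) :=
    fun z hz => plen_lowOpt (add_mem_posQuad ha hz)
  have hshift : IsShiftedConfig ω a ωa :=
    { origin := h0.trans (plen_lowOpt ha)
      axis_fst := fun x h1 => by
        rw [hx x h1, hL _ ⟨by simp; omega, le_rfl⟩, hL _ ⟨by simp; omega, le_rfl⟩]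
      axis_snd := fun y h1 => by
        rw [hy y h1, hL _ ⟨le_rfl, by simp; omega⟩, hL _ ⟨le_rfl, by simp; omega⟩]
      off_axes := hoth }
  have hT : ∀ z ∈ posQuad, lastPassage ωa z = lastPassage ω (a + z) :=
    fun z hz => hshift.lastPassage_eq ha hz
  refine ⟨hshift.nonneg hω ha, fun z hz => ?_, treeV_add ha hT le_rfl le_rfl⟩
  rw [plen_lowOpt hz, hL z hz, hT z hz]
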